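/- For all integers n and k with 2 ≤ k ≤ n, the k-connectivity of the complete graph K_n equals n - ⌈k/2⌉. -/

import Mathlib

/-!
Let `S` be a `k`-set of vertices, `k ≥ 2`. Internally disjoint trees connecting `S` are of two
kinds. Those with vertex set exactly `S` are edge-disjoint spanning trees of the clique on `S`,
each using `k - 1` of its `k(k-1)/2` edges, so there are at most `⌊k/2⌋` of them. Each of the
others has a vertex outside `S`, and these private vertices are distinct, so there are at most
`|Sᶜ|` of them. In `K_n` both bounds are attained: every vertex outside `S` is the centre of a
star spanning `S`, and pairing up the vertices of `S` gives `⌊k/2⌋` edge-disjoint spanning double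
stars of `K_S`. Hence `κ(S) = (n - k) + ⌊k/2⌋ = n - ⌈k/2⌉` for every `k`-set `S`.
-/

/-- `ℓ` pairwise edge-disjoint trees in `G`, each containing `S`, whose pairwise
vertex intersections equal exactly `S` (an internally disjoint set of trees connecting `S`). -/
def InternallyDisjointTrees {V : Type*} (G : SimpleGraph V) (S : Set V) (ℓ : ℕ) : Prop :=
  ∃ T : Fin ℓ → G.Subgraph,
    (∀ n, (T n).coe.IsTree) ∧
    (∀ n, S ⊆ (T n).verts) ∧
    (∀ m n, m ≠ n → (T m).verts ∩ (T n).verts = S) ∧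
    (∀ m n, m ≠ n → (T m).edgeSet ∩ (T n).edgeSet = ∅)

/-- `κ(S)`: the maximum number of internally disjoint trees connecting `S`. -/
noncomputable def kappaS {V : Type*} (G : SimpleGraph V) (S : Set V) : ℕ :=
  sSup {ℓ | InternallyDisjointTrees G S ℓ}

/-- The `k`-connectivity `κ_k(G)`: the minimum of `κ(S)` over all `k`-subsets `S`. -/
noncomputable def kappaK {V : Type*} (G : SimpleGraph V) (k : ℕ) : ℕ :=
  sInf {n | ∃ S : Set V, S.ncard = k ∧ kappaS G S = n}

open Finset SimpleGraph

namespace SimpleGraph.Subgraph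

variable {V : Type*} {G : SimpleGraph V} (H : G.Subgraph)

lemma ncard_edgeSet_eq_natCard_coe : H.edgeSet.ncard = Nat.card H.coe.edgeSet := by
  rw [← image_coe_edgeSet_coe, Set.ncard_image_of_injective _
    (Sym2.map.injective Subtype.val_injective), Nat.card_coe_set_eq]

variable [Finite V]

lemma ncard_edgeSet_add_one_of_isTree (hH : H.coe.IsTree) :
    H.edgeSet.ncard + 1 = H.verts.ncard := by
  rw [ncard_edgeSet_eq_natCard_coe, ← Nat.card_coe_set_eq]
  exact (isTree_iff_connected_and_card.mp hH).2

lemma ncard_edgeSet_le_choose_two : H.edgeSet.ncard ≤ H.verts.ncard.choose 2 := by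
  classical
  have := Fintype.ofFinite H.verts
  rw [ncard_edgeSet_eq_natCard_coe, ← Nat.card_coe_set_eq, Nat.card_eq_fintype_card,
    ← Set.toFinset_card, Nat.card_eq_fintype_card]
  exact card_edgeFinset_le_card_choose_two

end SimpleGraph.Subgraph

section UpperBound

variable {V ι : Type*} [Finite V] {G : SimpleGraph V} {S : Set V}

lemma card_le_ncard_compl_of_inter_eq {W : ι → Set V} {s : Finset ι}
    (hssub : ∀ i ∈ s, S ⊂ W i) (hinter : ∀ i ∈ s, ∀ j ∈ s, i ≠ j → W i ∩ W j = S) :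
    #s ≤ Sᶜ.ncard := by
  classical
  have := Fintype.ofFinite V
  have hdisj : (s : Set ι).PairwiseDisjoint fun i => (W i \ S).toFinset := by
    intro i hi j hj hij
    refine Set.disjoint_toFinset.2 <| Set.disjoint_left.2 fun x hxi hxj => hxi.2 ?_
    exact hinter i hi j hj hij ▸ ⟨hxi.1, hxj.1⟩
  calc #s ≤ #(s.biUnion fun i => (W i \ S).toFinset) :=
        card_le_card_biUnion hdisj fun i hi =>
          Set.toFinset_nonempty.2 (Set.nonempty_of_ssubset (hssub i hi))
    _ ≤ #Sᶜ.toFinset := card_le_card <| biUnion_subset.2 fun i _ x => by simp +contextual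
    _ = Sᶜ.ncard := (Set.ncard_eq_toFinset_card' _).symm

lemma le_div_two_of_mul_pred_le_choose_two {m k : ℕ} (hk : 2 ≤ k)
    (h : m * (k - 1) ≤ k.choose 2) : m ≤ k / 2 := by
  rw [Nat.choose_two_right, Nat.le_div_iff_mul_le two_pos] at h
  rw [Nat.le_div_iff_mul_le two_pos]
  refine Nat.le_of_mul_le_mul_right (c := k - 1) ?_ (by omega)
  linarith

lemma card_le_ncard_div_two_of_isTree {T : ι → G.Subgraph} {s : Finset ι} (hS : 2 ≤ S.ncard)
    (htree : ∀ i ∈ s, (T i).coe.IsTree) (hverts : ∀ i ∈ s, (T i).verts = S)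
    (hdisj : (s : Set ι).PairwiseDisjoint fun i => (T i).edgeSet) : #s ≤ S.ncard / 2 := by
  classical
  have := Fintype.ofFinite V
  set K := (⊤ : G.Subgraph).induce S
  have hcard : ∀ i ∈ s, #(T i).edgeSet.toFinset = S.ncard - 1 := by
    intro i hi
    have := (T i).ncard_edgeSet_add_one_of_isTree (htree i hi)
    rw [hverts i hi, Set.ncard_eq_toFinset_card'] at this
    omega
  have hsub : ∀ i ∈ s, (T i).edgeSet.toFinset ⊆ K.edgeSet.toFinset := fun i hi => by
    have := Subgraph.edgeSet_mono (T i).le_induce_top_verts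
    rw [hverts i hi] at this
    simpa using this
  refine le_div_two_of_mul_pred_le_choose_two hS ?_
  calc #s * (S.ncard - 1) = #(s.biUnion fun i => (T i).edgeSet.toFinset) := by
        rw [card_biUnion fun i hi j hj hij => Set.disjoint_toFinset.2 (hdisj hi hj hij),
          sum_congr rfl hcard, sum_const, smul_eq_mul]
    _ ≤ K.edgeSet.ncard := by
        rw [Set.ncard_eq_toFinset_card']
        exact card_le_card (biUnion_subset.2 hsub)
    _ ≤ S.ncard.choose 2 := K.ncard_edgeSet_le_choose_two

lemma InternallyDisjointTrees.le_ncard_compl_add {ℓ : ℕ} (h : InternallyDisjointTrees G S ℓ)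
    (hS : 2 ≤ S.ncard) : ℓ ≤ Sᶜ.ncard + S.ncard / 2 := by
  classical
  obtain ⟨T, htree, hsub, hverts, hedges⟩ := h
  set A := ({i | (T i).verts = S} : Finset (Fin ℓ))
  have hAc : #Aᶜ ≤ Sᶜ.ncard := card_le_ncard_compl_of_inter_eq
    (fun i hi => (hsub i).ssubset_of_ne (Ne.symm (by simpa [A] using hi)))
    fun i _ j _ hij => hverts i j hij
  have hA : #A ≤ S.ncard / 2 := card_le_ncard_div_two_of_isTree hS (fun i _ => htree i)
    (fun i hi => by simpa [A] using hi)
    fun i _ j _ hij => Set.disjoint_iff_inter_eq_empty.2 (hedges i j hij)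
  calc ℓ = #Aᶜ + #A := by rw [add_comm, card_add_card_compl, Fintype.card_fin]
    _ ≤ Sᶜ.ncard + S.ncard / 2 := add_le_add hAc hA

end UpperBound

section LowerBound

variable {V : Type*}

lemma SimpleGraph.isAcyclic_of_subsingleton_neighborSet (G : SimpleGraph V) (c₁ c₂ : V)
    (h : ∀ x, x ≠ c₁ → x ≠ c₂ → (G.neighborSet x).Subsingleton) : G.IsAcyclic := by
  intro v c hc
  obtain ⟨x, hx, hx₁, hx₂⟩ : ∃ x ∈ c.support.tail, x ≠ c₁ ∧ x ≠ c₂ := by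
    by_contra! hsub
    have hlen := (hc.support_nodup.subperm (l₂ := [c₁, c₂]) fun x hx => by
      by_cases hx₁ : x = c₁
      · simp [hx₁]
      · simp [hsub x hx hx₁]).length_le
    simp only [List.length_tail, Walk.length_support, add_tsub_cancel_right, List.length_cons,
      List.length_nil] at hlen
    have := hc.three_le_length
    omega
  obtain ⟨a, b, hab, hnbr⟩ :=
    Set.ncard_eq_two.1 (hc.ncard_neighborSet_toSubgraph_eq_two (List.mem_of_mem_tail hx))
  exact hab ((h x hx₁ hx₂).anti (c.toSubgraph.neighborSet_subset x) (by simp [hnbr])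
    (by simp [hnbr]))

def parentSubgraph (W : Set V) (p : V → V) : (⊤ : SimpleGraph V).Subgraph where
  verts := W
  Adj x y := x ∈ W ∧ y ∈ W ∧ x ≠ y ∧ (y = p x ∨ x = p y)
  adj_sub h := h.2.2.1
  edge_vert h := h.1
  symm := ⟨fun _ _ h => ⟨h.2.1, h.1, h.2.2.1.symm, h.2.2.2.symm⟩⟩

lemma isTree_parentSubgraph {W : Set V} {p : V → V} {c₁ c₂ : V} (h₁ : c₁ ∈ W) (h₂ : c₂ ∈ W)
    (hc : p c₁ = c₂) (hp : ∀ x ∈ W, p x = c₁ ∨ p x = c₂) : (parentSubgraph W p).coe.IsTree := by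
  set H := parentSubgraph W p
  have hparent :
      ∀ x (hx : x ∈ W) y (hy : y ∈ W), y = p x → H.coe.Reachable ⟨x, hx⟩ ⟨y, hy⟩ := by
    rintro x hx y hy rfl
    by_cases hxp : x = p x
    · simp only [← hxp]; rfl
    · exact Adj.reachable (show H.Adj x (p x) from ⟨hx, hy, hxp, .inl rfl⟩)
  have hreach : ∀ x (hx : x ∈ W), H.coe.Reachable ⟨x, hx⟩ ⟨c₁, h₁⟩ := by
    intro x hx
    have hc₂ := (hparent c₁ h₁ c₂ h₂ hc.symm).symm
    rcases hp x hx with hpx | hpx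
    · exact hparent x hx c₁ h₁ hpx.symm
    · exact (hparent x hx c₂ h₂ hpx.symm).trans hc₂
  refine ⟨(connected_iff_exists_forall_reachable _).2
    ⟨⟨c₁, h₁⟩, fun x => (hreach _ x.2).symm⟩, ?_⟩
  refine isAcyclic_of_subsingleton_neighborSet _ ⟨c₁, h₁⟩ ⟨c₂, h₂⟩ fun x hx₁ hx₂ => ?_
  have hchild : ∀ y : W, H.coe.Adj x y → (y : V) = p x := by
    rintro y ⟨-, hy, -, hxy | hyx⟩
    · exact hxy
    · rcases hp y hy with h | h <;> simp_all [Subtype.ext_iff]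
  exact fun y hy z hz => Subtype.ext ((hchild y hy).trans (hchild z hz).symm)

/- The `j`-th double star has centres `2j` and `2j+1`, each the parent of the other. Any other
label `a` hangs from the centre of its own parity if `a` lies in a later pair than `j`, and of the
opposite parity otherwise; so of the four edges between the pairs `i < i'`, the two joining equal
parities belong to star `i` and the other two to star `i'`. -/
def doubleStarParent (j a : ℕ) : ℕ := 2 * j + (if a / 2 ≤ j then a + 1 else a) % 2

lemma doubleStarParent_eq_or (j a : ℕ) :
    doubleStarParent j a = 2 * j ∨ doubleStarParent j a = 2 * j + 1 := by
  unfold doubleStarParent; split_ifs <;> omega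

lemma doubleStarParent_two_mul (j : ℕ) : doubleStarParent j (2 * j) = 2 * j + 1 := by
  unfold doubleStarParent; split_ifs <;> omega

lemma doubleStarParent_edges_disjoint {j j' a b : ℕ} (hj : j ≠ j')
    (h : b = doubleStarParent j a ∨ a = doubleStarParent j b) :
    ¬(b = doubleStarParent j' a ∨ a = doubleStarParent j' b) := by
  unfold doubleStarParent at *; split_ifs at * <;> omega

lemma exists_pairwise_disjoint_isTree_verts_eq [Nonempty V] {S : Set V} (hS : S.Finite) :
    ∃ T : Fin (S.ncard / 2) → (⊤ : SimpleGraph V).Subgraph, (∀ j, (T j).coe.IsTree) ∧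
      (∀ j, (T j).verts = S) ∧ Pairwise fun i j => Disjoint (T i).edgeSet (T j).edgeSet := by
  obtain ⟨vert, hvert⟩ := (Set.finite_Iio S.ncard).exists_bijOn_of_encard_eq
    (t := S) (by rw [← hS.cast_ncard_eq, ← (Set.finite_Iio _).cast_ncard_eq, Set.ncard_Iio_nat])
  set lab := Function.invFunOn vert (Set.Iio S.ncard)
  have hparent : ∀ j : Fin (S.ncard / 2), ∀ a, doubleStarParent j a < S.ncard := fun j a => by
    rcases doubleStarParent_eq_or j a with h | h <;> omega
  have hlab : ∀ a < S.ncard, lab (vert a) = a := fun _ ha => hvert.injOn.leftInvOn_invFunOn ha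
  set T := fun j : Fin (S.ncard / 2) => parentSubgraph S (vert ∘ doubleStarParent j ∘ lab)
  refine ⟨T, fun j => ?_, fun j => rfl, ?_⟩
  · have hj : 2 * (j : ℕ) + 1 < S.ncard := by omega
    refine isTree_parentSubgraph (c₁ := vert (2 * j)) (c₂ := vert (2 * j + 1))
      (hvert.mapsTo (by simp; omega)) (hvert.mapsTo hj) ?_ fun x _ => ?_
    · simp only [Function.comp_apply]
      rw [hlab _ (by omega), doubleStarParent_two_mul]
    · rcases doubleStarParent_eq_or j (lab x) with h | h <;> simp [h]
  · intro i j hij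
    refine Set.disjoint_left.2 fun e hi hj => ?_
    induction e using Sym2.ind with | _ x y => ?_
    have hadj : ∀ j, (T j).Adj x y →
        lab y = doubleStarParent j (lab x) ∨ lab x = doubleStarParent j (lab y) := by
      rintro j ⟨-, -, -, h | h⟩
      · exact .inl (by rw [h]; exact hlab _ (hparent j _))
      · exact .inr (by rw [h]; exact hlab _ (hparent j _))
    exact doubleStarParent_edges_disjoint (Fin.val_injective.ne hij) (hadj i hi) (hadj j hj)

lemma internallyDisjointTrees_of_pairwise {G : SimpleGraph V} {S : Set V} {ι : Type*} [Finite ι]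
    (T : ι → G.Subgraph) (htree : ∀ i, (T i).coe.IsTree) (hsub : ∀ i, S ⊆ (T i).verts)
    (hverts : Pairwise fun i j => (T i).verts ∩ (T j).verts = S)
    (hedges : Pairwise fun i j => Disjoint (T i).edgeSet (T j).edgeSet) :
    InternallyDisjointTrees G S (Nat.card ι) := by
  let e := Finite.equivFin ι
  exact ⟨T ∘ e.symm, fun i => htree _, fun i => hsub _,
    fun i j hij => hverts (e.symm.injective.ne hij),
    fun i j hij => Set.disjoint_iff_inter_eq_empty.1 (hedges (e.symm.injective.ne hij))⟩

lemma internallyDisjointTrees_top [Finite V] {S : Set V} (hS : S.Nonempty) :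
    InternallyDisjointTrees (⊤ : SimpleGraph V) S (Sᶜ.ncard + S.ncard / 2) := by
  have : Nonempty V := ⟨hS.some⟩
  obtain ⟨inner, hinnerTree, hinnerVerts, hinnerDisj⟩ :=
    exists_pairwise_disjoint_isTree_verts_eq S.toFinite
  let star (v : V) := parentSubgraph (insert v S) fun _ => v
  have hstar {v x y : V} (h : (star v).Adj x y) : x = v ∨ y = v := h.2.2.2.symm
  have hinner {i x y} (h : (inner i).Adj x y) : x ∈ S ∧ y ∈ S :=
    ⟨hinnerVerts i ▸ h.fst_mem, hinnerVerts i ▸ h.snd_mem⟩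
  have hverts_inner_star (i) (w : V) : (inner i).verts ∩ (star w).verts = S := by
    rw [hinnerVerts]; exact Set.inter_eq_left.2 (Set.subset_insert _ _)
  have hedges_inner_star (i) (w : ↥Sᶜ) : Disjoint (inner i).edgeSet (star w).edgeSet := by
    refine Set.disjoint_left.2 fun e hi hw => ?_
    induction e using Sym2.ind with | _ x y => ?_
    rcases hstar hw with rfl | rfl
    exacts [w.2 (hinner hi).1, w.2 (hinner hi).2]
  rw [add_comm, ← Nat.card_fin (S.ncard / 2), ← Nat.card_coe_set_eq Sᶜ, ← Nat.card_sum]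
  refine internallyDisjointTrees_of_pairwise (Sum.elim inner fun v : ↥Sᶜ => star v) ?_ ?_ ?_ ?_
  · rintro (j | v)
    · exact hinnerTree j
    · exact isTree_parentSubgraph (Set.mem_insert _ _) (Set.mem_insert _ _) rfl
        fun _ _ => .inl rfl
  · rintro (j | v)
    · exact (hinnerVerts j).ge
    · exact Set.subset_insert _ _
  · rintro (i | v) (j | w) hne
    · simp [hinnerVerts]
    · exact hverts_inner_star i w
    · exact Set.inter_comm _ _ ▸ hverts_inner_star j v
    · have hvw : (v : V) ≠ w := fun h => hne (congrArg Sum.inr (Subtype.ext h))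
      change insert (v : V) S ∩ insert (w : V) S = S
      have hv : (v : V) ∉ insert (w : V) S := by
        simp only [Set.mem_insert_iff, hvw, false_or]; exact v.2
      rw [Set.insert_inter_of_notMem hv, Set.inter_insert_of_notMem w.2, Set.inter_self]
  · rintro (i | v) (j | w) hne
    · exact hinnerDisj fun h => hne (congrArg Sum.inl h)
    · exact hedges_inner_star i w
    · exact (hedges_inner_star j v).symm
    · have hvw : (v : V) ≠ w := fun h => hne (congrArg Sum.inr (Subtype.ext h))
      refine Set.disjoint_left.2 fun e hv hw => ?_
      induction e using Sym2.ind with | _ x y => ?_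
      obtain ⟨hx, hy, -⟩ := hw
      rcases hstar hv with rfl | rfl
      · exact hx.elim hvw v.2
      · exact hy.elim hvw v.2

end LowerBound

lemma kappaS_top {V : Type*} [Finite V] {S : Set V} (hS : 2 ≤ S.ncard) :
    kappaS ⊤ S = Sᶜ.ncard + S.ncard / 2 :=
  IsGreatest.csSup_eq ⟨internallyDisjointTrees_top (Set.nonempty_of_ncard_ne_zero (by omega)),
    fun _ h => InternallyDisjointTrees.le_ncard_compl_add h hS⟩

theorem stmt_11 (n k : ℕ) (hk2 : 2 ≤ k) (hkn : k ≤ n) :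
    kappaK (⊤ : SimpleGraph (Fin n)) k = n - (k + 1) / 2 := by
  have hκ (S : Set (Fin n)) (hS : S.ncard = k) : kappaS ⊤ S = n - (k + 1) / 2 := by
    rw [kappaS_top (hS ▸ hk2), Set.ncard_compl, hS, Nat.card_fin]
    omega
  obtain ⟨S, -, hS⟩ := Set.exists_subset_card_eq (s := (Set.univ : Set (Fin n))) (n := k)
    (by rwa [Set.ncard_univ, Nat.card_fin])
  have hvalues : {m | ∃ S : Set (Fin n), S.ncard = k ∧ kappaS ⊤ S = m} = {n - (k + 1) / 2} := by
    ext m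
    constructor
    · rintro ⟨S, hS, rfl⟩
      exact hκ S hS
    · rintro rfl
      exact ⟨S, hS, hκ S hS⟩
  rw [kappaK, hvalues, csInf_singleton]
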